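/- Let S[i..j] be a unique palindromic substring of S, and suppose S[i'..j'] is a palindromic substring of S with i ≤ i' ≤ j' ≤ j and i'+j' ≠ i+j (different center). Then S[i'..j'] occurs at least twice in S, so it is not unique. -/

import Mathlib

/-- `sub S i j` is the substring `S[i..j]`, 1-indexed and inclusive. -/
def sub (S : List Char) (i j : ℕ) : List Char := (S.drop (i-1)).take (j+1-i)

/-- A string is a palindrome if it equals its reversal. -/
def isPal (w : List Char) : Prop := w.reverse = w

/-- The set of (1-indexed) occurrence positions of `w` in `S`. -/
def occs (S w : List Char) : Finset ℕ :=
  (Finset.Icc 1 S.length).filter (fun p => sub S p (p + w.length - 1) = w)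

/-- `w` occurs exactly once in `S`. -/
def uniqueIn (S w : List Char) : Prop := (occs S w).card = 1

/-- `[i,j]` is (the interval of) a unique palindromic substring of `S`. -/
def UPS (S : List Char) (i j : ℕ) : Prop :=
  1 ≤ i ∧ i ≤ j ∧ j ≤ S.length ∧ isPal (sub S i j) ∧ uniqueIn S (sub S i j)

/-- `[i,j]` is a minimal unique palindromic substring of `S`. -/
def MUPS (S : List Char) (i j : ℕ) : Prop :=
  UPS S i j ∧ (j + 1 - i ≤ 2 ∨ 2 ≤ (occs S (sub S (i+1) (j-1))).card)

/-- `[i,j]` is a shortest unique palindromic substring of `S` for the query `[s,t]`. -/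
def SUPS (S : List Char) (s t i j : ℕ) : Prop :=
  UPS S i j ∧ i ≤ s ∧ s ≤ t ∧ t ≤ j ∧
    ∀ i' j', UPS S i' j' → i' ≤ s → t ≤ j' → j - i ≤ j' - i'

/-!
Reflecting `S[i'..j']` through the centre of the palindrome `S[i..j]` gives an occurrence
`S[i+j-j'..i+j-i']` of its reversal, which is `S[i'..j']` again; the two start positions
differ because the centres differ.
-/

lemma List.take_drop_reverse {α : Type*} (t : List α) {a n : ℕ} (h : a + n ≤ t.length) :
    (t.reverse.drop (t.length - (a + n))).take n = ((t.drop a).take n).reverse := by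
  rw [List.drop_reverse, List.take_reverse, List.reverse_inj, List.drop_take,
    List.length_take, Nat.min_eq_left (by omega), Nat.sub_sub_self h, Nat.sub_sub_self (by omega),
    Nat.add_sub_cancel]

lemma length_sub {S : List Char} {i j : ℕ} (hi : 1 ≤ i) (hj : j ≤ S.length) :
    (sub S i j).length = j + 1 - i := by
  simp only [sub, List.length_take, List.length_drop]
  omega

lemma sub_eq_take_drop_sub (S : List Char) {i j p q : ℕ} (hi : 1 ≤ i) (hip : i ≤ p) (hqj : q ≤ j) :
    sub S p q = ((sub S i j).drop (p - i)).take (q + 1 - p) := by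
  rw [sub, sub, List.drop_take, List.drop_drop, List.take_take, Nat.min_eq_left (by omega),
    show i - 1 + (p - i) = p - 1 by omega]

lemma sub_reflect_of_isPal {S : List Char} {i j p q : ℕ} (hi : 1 ≤ i) (hj : j ≤ S.length)
    (hpal : isPal (sub S i j)) (hip : i ≤ p) (hpq : p ≤ q) (hqj : q ≤ j) :
    sub S (i + j - q) (i + j - p) = (sub S p q).reverse := by
  have hlen := length_sub hi hj
  rw [sub_eq_take_drop_sub S hi hip hqj, sub_eq_take_drop_sub S hi (by omega : i ≤ i + j - q)
      (by omega : i + j - p ≤ j),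
    show i + j - p + 1 - (i + j - q) = q + 1 - p by omega,
    ← List.take_drop_reverse _ (by omega), hpal, hlen,
    show j + 1 - i - (p - i + (q + 1 - p)) = i + j - q - i by omega]

lemma mem_occs_sub {S : List Char} {p q : ℕ} (hp : 1 ≤ p) (hpq : p ≤ q) (hq : q ≤ S.length) :
    p ∈ occs S (sub S p q) := by
  rw [occs, Finset.mem_filter, Finset.mem_Icc, length_sub hp hq,
    show p + (q + 1 - p) - 1 = q by omega]
  exact ⟨⟨hp, by omega⟩, rfl⟩

theorem stmt9 (S : List Char) (i j i' j' : ℕ)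
    (h : UPS S i j) (h1 : i ≤ i') (h2 : i' ≤ j') (h3 : j' ≤ j)
    (hpal : isPal (sub S i' j')) (hc : i' + j' ≠ i + j) :
    2 ≤ (occs S (sub S i' j')).card ∧ ¬ uniqueIn S (sub S i' j') := by
  obtain ⟨hi, -, hj, hpalT, -⟩ := h
  have hmirror : i + j - j' ∈ occs S (sub S i' j') := by
    rw [← hpal, ← sub_reflect_of_isPal hi hj hpalT h1 h2 h3]
    exact mem_occs_sub (by omega) (by omega) (by omega)
  have htwo : 2 ≤ (occs S (sub S i' j')).card :=
    Finset.one_lt_card.mpr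
      ⟨i', mem_occs_sub (by omega) h2 (by omega), _, hmirror, by omega⟩
  exact ⟨htwo, fun hu => by rw [uniqueIn] at hu; omega⟩
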